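/- arXiv:2605.13147 — 4 statements merged into one kernel-verified Lean document; each statement's English description precedes it below -/
import Mathlib

section
/- Let X = {0,1,2} with the absolute-value metric and T : X → X defined by T0 = 1, T1 = 0, T2 = 1. Then for all pairwise distinct x,y,z ∈ X, P(Tx,Ty,Tz) ≤ (3/4)·P(x,y,z), but T has no fixed point. -/
/-! Three distinct points of `{0, 1, 2}` are `0, 1, 2` in some order, with perimeter `4`, while `T`
takes values in `[0, 1]`, so the image triangle has perimeter at most `2 ≤ 3/4 · 4`. -/

open Set

/-- On the line the perimeter of a triangle is twice its diameter. -/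
lemma perimeter_le_of_mem_Icc {a b c lo hi : ℝ} (ha : a ∈ Icc lo hi) (hb : b ∈ Icc lo hi)
    (hc : c ∈ Icc lo hi) : dist a b + dist b c + dist a c ≤ 2 * (hi - lo) := by
  obtain ⟨ha₀, ha₁⟩ := ha
  obtain ⟨hb₀, hb₁⟩ := hb
  obtain ⟨hc₀, hc₁⟩ := hc
  simp only [Real.dist_eq]
  rcases abs_cases (a - b) with ⟨hab, -⟩ | ⟨hab, -⟩ <;>
  rcases abs_cases (b - c) with ⟨hbc, -⟩ | ⟨hbc, -⟩ <;>
  rcases abs_cases (a - c) with ⟨hac, -⟩ | ⟨hac, -⟩ <;>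
  linarith

lemma perimeter_eq_four_of_pairwise_ne {x y z : ℝ} (hx : x ∈ ({0, 1, 2} : Set ℝ))
    (hy : y ∈ ({0, 1, 2} : Set ℝ)) (hz : z ∈ ({0, 1, 2} : Set ℝ))
    (hxy : x ≠ y) (hyz : y ≠ z) (hxz : x ≠ z) : dist x y + dist y z + dist x z = 4 := by
  rcases hx with rfl | rfl | rfl <;> rcases hy with rfl | rfl | rfl <;>
    rcases hz with rfl | rfl | rfl <;> norm_num [Real.dist_eq] at *

theorem stmt_2 (T : ({0,1,2} : Set ℝ) → ({0,1,2} : Set ℝ))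
    (hT0 : (T ⟨0, by norm_num⟩ : ℝ) = 1)
    (hT1 : (T ⟨1, by norm_num⟩ : ℝ) = 0)
    (hT2 : (T ⟨2, by norm_num⟩ : ℝ) = 1) :
    (∀ x y z : ({0,1,2} : Set ℝ), x ≠ y → y ≠ z → x ≠ z →
      dist (T x) (T y) + dist (T y) (T z) + dist (T x) (T z) ≤
        (3/4) * (dist x y + dist y z + dist x z)) ∧
    ¬ ∃ x : ({0,1,2} : Set ℝ), T x = x := by
  have hrange : ∀ x, (T x : ℝ) ∈ Icc (0 : ℝ) 1 := by
    rintro ⟨x, hx⟩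
    rcases hx with rfl | rfl | rfl <;> norm_num [hT0, hT1, hT2]
  refine ⟨fun x y z hxy hyz hxz => ?_, ?_⟩
  · have hP := perimeter_eq_four_of_pairwise_ne x.2 y.2 z.2
      (Subtype.coe_ne_coe.mpr hxy) (Subtype.coe_ne_coe.mpr hyz) (Subtype.coe_ne_coe.mpr hxz)
    simp only [Subtype.dist_eq] at hP ⊢
    linarith [perimeter_le_of_mem_Icc (hrange x) (hrange y) (hrange z)]
  · rintro ⟨⟨x, hx⟩, hfix⟩
    have hval := congrArg Subtype.val hfix
    rcases hx with rfl | rfl | rfl <;> norm_num [hT0, hT1, hT2] at hval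
end

section
/- Let (X,d) be a complete metric space with |X| ≥ 3 and T : X → X a large triangle-perimeter contraction. If T has no periodic points of prime period 2 (T²x ≠ x for all x with Tx ≠ x) and there exist x₀ ∈ X and L > 0 with d(x₀, Tⁿx₀) ≤ L for all n ≥ 1, then T has a fixed point, and T has at most two fixed points. -/
/-!
Along an orbit without fixed points and without points of period two, every triangle of orbit
points stays a genuine triangle under `T`, so its perimeter keeps decreasing, and by the large
contraction condition it shrinks geometrically as long as it is not already small. Applied to the
triangles `(xₙ, xₙ₊ⱼ, xₙ₊ⱼ₊₁)`, whose initial perimeters are bounded by `4L`, this makes the orbit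
Cauchy, and its limit is a fixed point. Three distinct fixed points would form a triangle whose
perimeter `T` does not decrease.
-/

open Filter Function Topology

noncomputable def perimeter {X : Type*} [PseudoMetricSpace X] (x y z : X) : ℝ :=
  dist x y + dist y z + dist x z

def ContractsPerimeters {X : Type*} [PseudoMetricSpace X] (T : X → X) : Prop :=
  ∀ x y z : X, x ≠ y → y ≠ z → x ≠ z → perimeter (T x) (T y) (T z) < perimeter x y z

theorem le_max_pow_mul_of_le_mul {u : ℕ → ℝ} {δ ε : ℝ} (hδ : 0 ≤ δ)
    (hanti : ∀ k, u (k + 1) ≤ u k) (hcontr : ∀ k, ε ≤ u k → u (k + 1) ≤ δ * u k) :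
    ∀ k, u k ≤ max (δ ^ k * u 0) ε
  | 0 => by simp
  | k + 1 => by
    rcases le_max_iff.mp (le_max_pow_mul_of_le_mul hδ hanti hcontr k) with h | h
    · by_cases hε : ε ≤ u k
      · refine le_max_of_le_left ?_
        calc u (k + 1) ≤ δ * u k := hcontr k hε
          _ ≤ δ * (δ ^ k * u 0) := mul_le_mul_of_nonneg_left h hδ
          _ = δ ^ (k + 1) * u 0 := by ring
      · exact le_max_of_le_right ((hanti k).trans (not_le.mp hε).le)
    · exact le_max_of_le_right ((hanti k).trans h)

section PseudoMetric

variable {X : Type*} [PseudoMetricSpace X] {T : X → X}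

theorem dist_le_perimeter (x y z : X) : dist x y ≤ perimeter x y z := by
  unfold perimeter
  linarith [dist_nonneg (x := y) (y := z), dist_nonneg (x := x) (y := z)]

theorem perimeter_le_three_mul_max (x y z : X) :
    perimeter x y z ≤ 3 * max (max (dist x y) (dist y z)) (dist x z) := by
  unfold perimeter
  linarith [le_max_left (max (dist x y) (dist y z)) (dist x z),
    le_max_right (max (dist x y) (dist y z)) (dist x z),
    le_max_left (dist x y) (dist y z), le_max_right (dist x y) (dist y z)]

theorem exists_perimeter_le_mul_of_le
    (hii : ∀ ε > 0, ∃ δ ∈ Set.Ioo (0 : ℝ) 1, ∀ x y z : X,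
      max (max (dist x y) (dist y z)) (dist x z) ≥ ε →
        perimeter (T x) (T y) (T z) ≤ δ * perimeter x y z)
    {ε : ℝ} (hε : 0 < ε) :
    ∃ δ ∈ Set.Ioo (0 : ℝ) 1, ∀ x y z : X, ε ≤ perimeter x y z →
      perimeter (T x) (T y) (T z) ≤ δ * perimeter x y z := by
  obtain ⟨δ, hδ, hcontr⟩ := hii (ε / 3) (by positivity)
  refine ⟨δ, hδ, fun x y z hxyz => hcontr x y z ?_⟩
  linarith [perimeter_le_three_mul_max x y z]

namespace ContractsPerimeters

theorem eq_or_eq_or_eq_of_isFixedPt (hT : ContractsPerimeters T) {a b c : X}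
    (ha : IsFixedPt T a) (hb : IsFixedPt T b) (hc : IsFixedPt T c) :
    a = b ∨ b = c ∨ a = c := by
  by_contra! h
  have hlt := hT a b c h.1 h.2.1 h.2.2
  rw [ha.eq, hb.eq, hc.eq] at hlt
  exact lt_irrefl _ hlt

/-- The perimeter of `(y, T y, T² y)` strictly decreases along the orbit. -/
theorem injective_iterate (hT : ContractsPerimeters T) (hfix : ∀ y, T y ≠ y)
    (hper : ∀ y, T (T y) ≠ y) (x₀ : X) : Injective fun n => T^[n] x₀ := by
  set g : X → ℝ := fun y => perimeter y (T y) (T (T y))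
  have hanti : StrictAnti fun n => g (T^[n] x₀) := by
    refine strictAnti_nat_of_succ_lt fun n => ?_
    rw [iterate_succ_apply']
    exact hT _ _ _ (hfix _).symm (hfix _).symm (hper _).symm
  exact fun a b hab => hanti.injective (congrArg g hab)

theorem perimeter_iterate_le_max (hT : ContractsPerimeters T) {δ ε : ℝ} (hδ : 0 ≤ δ)
    (hcontr : ∀ x y z : X, ε ≤ perimeter x y z →
      perimeter (T x) (T y) (T z) ≤ δ * perimeter x y z)
    {a b c : X} (hne : ∀ k, T^[k] a ≠ T^[k] b ∧ T^[k] b ≠ T^[k] c ∧ T^[k] a ≠ T^[k] c)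
    (k : ℕ) :
    perimeter (T^[k] a) (T^[k] b) (T^[k] c) ≤ max (δ ^ k * perimeter a b c) ε := by
  refine le_max_pow_mul_of_le_mul (u := fun k => perimeter (T^[k] a) (T^[k] b) (T^[k] c))
    hδ (fun k => ?_) (fun k hk => ?_) k
  · simp only [iterate_succ_apply']
    exact (hT _ _ _ (hne k).1 (hne k).2.1 (hne k).2.2).le
  · simp only [iterate_succ_apply']
    exact hcontr _ _ _ hk

/-- The triangle `(xₙ, xₙ₊ⱼ, xₙ₊ⱼ₊₁)` is the image under `Tⁿ` of `(x₀, xⱼ, xⱼ₊₁)`, whose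
perimeter is at most `4L`; hence `d(xₙ, xₙ₊ⱼ) ≤ max (δⁿ · 4L) (ε/2)` uniformly in `j`. -/
theorem cauchySeq_iterate (hT : ContractsPerimeters T)
    (hii : ∀ ε > 0, ∃ δ ∈ Set.Ioo (0 : ℝ) 1, ∀ x y z : X,
      max (max (dist x y) (dist y z)) (dist x z) ≥ ε →
        perimeter (T x) (T y) (T z) ≤ δ * perimeter x y z)
    {x₀ : X} (hinj : Injective fun n => T^[n] x₀) {L : ℝ}
    (hbd : ∀ n, 1 ≤ n → dist x₀ (T^[n] x₀) ≤ L) :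
    CauchySeq fun n => T^[n] x₀ := by
  refine Metric.cauchySeq_iff'.2 fun ε hε => ?_
  obtain ⟨δ, ⟨hδ0, hδ1⟩, hcontr⟩ := exists_perimeter_le_mul_of_le hii (half_pos hε)
  obtain ⟨N, hN⟩ := ((tendsto_pow_atTop_nhds_zero_of_lt_one hδ0.le hδ1).mul_const (4 * L)
    |>.eventually (gt_mem_nhds (by simpa using half_pos hε))).exists
  refine ⟨N, fun n hn => ?_⟩
  obtain ⟨j, rfl⟩ := Nat.exists_eq_add_of_le hn
  rcases Nat.eq_zero_or_pos j with rfl | hj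
  · simpa using hε
  have hstart : perimeter x₀ (T^[j] x₀) (T^[j + 1] x₀) ≤ 4 * L := by
    have h₁ := hbd j hj
    have h₂ := hbd (j + 1) (by omega)
    have h₃ := dist_triangle_left (T^[j] x₀) (T^[j + 1] x₀) x₀
    unfold perimeter
    linarith
  have hne : ∀ k, T^[k] x₀ ≠ T^[k] (T^[j] x₀) ∧ T^[k] (T^[j] x₀) ≠ T^[k] (T^[j + 1] x₀) ∧
      T^[k] x₀ ≠ T^[k] (T^[j + 1] x₀) := by
    intro k
    simp only [← iterate_add_apply]
    exact ⟨hinj.ne (by omega), hinj.ne (by omega), hinj.ne (by omega)⟩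
  have hmax := hT.perimeter_iterate_le_max hδ0.le hcontr hne N
  simp only [← iterate_add_apply] at hmax
  rw [dist_comm]
  calc dist (T^[N] x₀) (T^[N + j] x₀)
      ≤ perimeter (T^[N] x₀) (T^[N + j] x₀) (T^[N + (j + 1)] x₀) := dist_le_perimeter _ _ _
    _ ≤ max (δ ^ N * perimeter x₀ (T^[j] x₀) (T^[j + 1] x₀)) (ε / 2) := hmax
    _ < ε := max_lt ((mul_le_mul_of_nonneg_left hstart (by positivity)).trans_lt hN)
        (half_lt_self hε)

end ContractsPerimeters

end PseudoMetric

/-- Eventually `p`, `xₙ₊₁`, `xₙ` are distinct, so `d(Tp, xₙ₊₂) ≤ P(Tp, xₙ₊₂, xₙ₊₁) < P(p, xₙ₊₁, xₙ)`,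
and the right-hand side tends to `0`. -/
theorem ContractsPerimeters.isFixedPt_of_tendsto_iterate {X : Type*} [MetricSpace X]
    {T : X → X} (hT : ContractsPerimeters T) {x₀ p : X} (hinj : Injective fun n => T^[n] x₀)
    (hp : Tendsto (fun n => T^[n] x₀) atTop (𝓝 p)) : IsFixedPt T p := by
  set x : ℕ → X := fun n => T^[n] x₀
  have hne : ∀ᶠ n in atTop, x n ≠ p := by
    rw [← Nat.cofinite_eq_atTop]
    exact hinj.tendsto_cofinite.eventually (eventually_cofinite_ne p)
  have hp₁ : Tendsto (fun n => x (n + 1)) atTop (𝓝 p) := hp.comp (tendsto_add_atTop_nat 1)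
  have hp₂ : Tendsto (fun n => x (n + 2)) atTop (𝓝 p) := hp.comp (tendsto_add_atTop_nat 2)
  have hperim : Tendsto (fun n => perimeter p (x (n + 1)) (x n)) atTop (𝓝 0) := by
    have hconst : Tendsto (fun _ : ℕ => p) atTop (𝓝 p) := tendsto_const_nhds
    simpa [perimeter] using ((hconst.dist hp₁).add (hp₁.dist hp)).add (hconst.dist hp)
  have hle : dist (T p) p ≤ 0 := by
    refine le_of_tendsto_of_tendsto (tendsto_const_nhds.dist hp₂) hperim ?_
    filter_upwards [hne, (tendsto_add_atTop_nat 1).eventually hne] with n h₀ h₁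
    have hstep := hT p (x (n + 1)) (x n) h₁.symm (hinj.ne (by omega)) h₀.symm
    simp only [x, ← iterate_succ_apply' T] at hstep
    exact (dist_le_perimeter _ _ _).trans hstep.le
  exact dist_le_zero.mp hle

theorem stmt_3_general {X : Type*} [MetricSpace X] [CompleteSpace X] (T : X → X)
    (hi : ∀ x y z : X, x ≠ y → y ≠ z → x ≠ z →
      dist (T x) (T y) + dist (T y) (T z) + dist (T x) (T z) <
        dist x y + dist y z + dist x z)
    (hii : ∀ ε : ℝ, ε > 0 → ∃ δ : ℝ, δ ∈ Set.Ioo (0:ℝ) 1 ∧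
      ∀ x y z : X, max (max (dist x y) (dist y z)) (dist x z) ≥ ε →
        dist (T x) (T y) + dist (T y) (T z) + dist (T x) (T z) ≤
          δ * (dist x y + dist y z + dist x z))
    (hper : ∀ x : X, T (T x) = x → T x = x)
    (x₀ : X) (L : ℝ)
    (hbd : ∀ n : ℕ, 1 ≤ n → dist x₀ (T^[n] x₀) ≤ L) :
    (∃ x : X, T x = x) ∧
    ∀ a b c : X, T a = a → T b = b → T c = c → a = b ∨ b = c ∨ a = c := by
  have hT : ContractsPerimeters T := hi
  refine ⟨?_, fun a b c => hT.eq_or_eq_or_eq_of_isFixedPt⟩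
  by_contra! hfix
  have hinj := hT.injective_iterate hfix (fun y h => hfix y (hper y h)) x₀
  obtain ⟨p, hp⟩ := cauchySeq_tendsto_of_complete (hT.cauchySeq_iterate hii hinj hbd)
  exact hfix p (hT.isFixedPt_of_tendsto_iterate hinj hp)

theorem stmt_3 {X : Type*} [MetricSpace X] [CompleteSpace X] (T : X → X)
    (h3 : ∃ a b c : X, a ≠ b ∧ b ≠ c ∧ a ≠ c)
    (hi : ∀ x y z : X, x ≠ y → y ≠ z → x ≠ z →
      dist (T x) (T y) + dist (T y) (T z) + dist (T x) (T z) <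
        dist x y + dist y z + dist x z)
    (hii : ∀ ε : ℝ, ε > 0 → ∃ δ : ℝ, δ ∈ Set.Ioo (0:ℝ) 1 ∧
      ∀ x y z : X, max (max (dist x y) (dist y z)) (dist x z) ≥ ε →
        dist (T x) (T y) + dist (T y) (T z) + dist (T x) (T z) ≤
          δ * (dist x y + dist y z + dist x z))
    (hper : ∀ x : X, T (T x) = x → T x = x)
    (x₀ : X) (L : ℝ) (hL : L > 0)
    (hbd : ∀ n : ℕ, 1 ≤ n → dist x₀ (T^[n] x₀) ≤ L) :
    (∃ x : X, T x = x) ∧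
    ∀ a b c : X, T a = a → T b = b → T c = c → a = b ∨ b = c ∨ a = c :=
  stmt_3_general T hi hii hper x₀ L hbd
end

section
/- Let X = [0,1] ∪ {4n, 4n+1 : n ∈ ℕ, n ≥ 1} ⊂ ℝ with the usual metric, and T : X → X defined by Tx = x/(x+1) for x ∈ [0,1], T(4n) = 0, T(4n+1) = 1 − 1/n. Then T is not a large contraction: for every δ ∈ (0,1) there exist x,y ∈ X with d(x,y) ≥ 1 and d(Tx,Ty) > δ·d(x,y). -/
lemma exists_one_le_nat_lt_one_sub_inv {δ : ℝ} (hδ : δ < 1) :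
    ∃ n : ℕ, 1 ≤ n ∧ δ < 1 - 1 / n := by
  obtain ⟨k, hk⟩ := exists_nat_one_div_lt (sub_pos.mpr hδ)
  refine ⟨k + 1, Nat.le_add_left 1 k, ?_⟩
  push_cast
  linarith

theorem stmt_12_general (T : ℝ → ℝ)
    (hT2 : ∀ n : ℕ, 1 ≤ n → T (4 * n) = 0 ∧ T (4 * n + 1) = 1 - 1 / n) :
    ∀ δ : ℝ, δ ∈ Set.Ioo (0:ℝ) 1 →
      ∃ x ∈ (Set.Icc (0:ℝ) 1 ∪ {t : ℝ | ∃ n : ℕ, 1 ≤ n ∧ (t = 4 * n ∨ t = 4 * n + 1)}),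
      ∃ y ∈ (Set.Icc (0:ℝ) 1 ∪ {t : ℝ | ∃ n : ℕ, 1 ≤ n ∧ (t = 4 * n ∨ t = 4 * n + 1)}),
        |x - y| ≥ 1 ∧ |T x - T y| > δ * |x - y| := by
  intro δ hδ
  obtain ⟨n, hn, hδn⟩ := exists_one_le_nat_lt_one_sub_inv hδ.2
  obtain ⟨hT4n, hT4n1⟩ := hT2 n hn
  have hdist : |(4 * n + 1 : ℝ) - 4 * n| = 1 := by simp
  refine ⟨4 * n + 1, Or.inr ⟨n, hn, Or.inr rfl⟩, 4 * n, Or.inr ⟨n, hn, Or.inl rfl⟩,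
    hdist.ge, ?_⟩
  rw [hdist, mul_one, hT4n, hT4n1, sub_zero]
  exact hδn.trans_le (le_abs_self _)

theorem stmt_12 (T : ℝ → ℝ)
    (hT1 : ∀ x ∈ Set.Icc (0:ℝ) 1, T x = x / (x + 1))
    (hT2 : ∀ n : ℕ, 1 ≤ n → T (4 * n) = 0 ∧ T (4 * n + 1) = 1 - 1 / n) :
    ∀ δ : ℝ, δ ∈ Set.Ioo (0:ℝ) 1 →
      ∃ x ∈ (Set.Icc (0:ℝ) 1 ∪ {t : ℝ | ∃ n : ℕ, 1 ≤ n ∧ (t = 4 * n ∨ t = 4 * n + 1)}),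
      ∃ y ∈ (Set.Icc (0:ℝ) 1 ∪ {t : ℝ | ∃ n : ℕ, 1 ≤ n ∧ (t = 4 * n ∨ t = 4 * n + 1)}),
        |x - y| ≥ 1 ∧ |T x - T y| > δ * |x - y| :=
  stmt_12_general T hT2
end

section
/- Let X = [0,1] ∪ {4n, 4n+1 : n ∈ ℕ, n ≥ 1} with the usual metric and T as defined. Then T is not a uniform triangle-perimeter contraction: there is no α ∈ [0,1) with P(Tx,Ty,Tz) ≤ α·P(x,y,z) for all pairwise distinct x,y,z. -/
/-!
On `[0, ∞)` the map `x ↦ x / (x + 1)` is increasing with difference quotients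
`1 / ((x + 1) (y + 1))`, so on a triple `a ≤ b ≤ c` it divides the perimeter exactly by
`(a + 1) (c + 1)`. For the triples `ε, 2ε, 3ε` this factor tends to `1` as `ε → 0`,
so no uniform ratio `α < 1` can bound it.
-/

open Filter Topology

lemma abs_sub_add_abs_sub_add_abs_sub_of_le {a b c : ℝ} (hab : a ≤ b) (hbc : b ≤ c) :
    |a - b| + |b - c| + |a - c| = 2 * (c - a) := by
  rw [abs_of_nonpos (by linarith), abs_of_nonpos (by linarith), abs_of_nonpos (by linarith)]
  ring

lemma div_add_one_sub_div_add_one {x y : ℝ} (hx : x + 1 ≠ 0) (hy : y + 1 ≠ 0) :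
    x / (x + 1) - y / (y + 1) = (x - y) / ((x + 1) * (y + 1)) := by
  field_simp
  ring

lemma div_add_one_le_div_add_one {x y : ℝ} (hx : 0 ≤ x) (hxy : x ≤ y) :
    x / (x + 1) ≤ y / (y + 1) := by
  rw [← sub_nonpos, div_add_one_sub_div_add_one (by linarith) (by linarith)]
  exact div_nonpos_of_nonpos_of_nonneg (by linarith) (mul_nonneg (by linarith) (by linarith))

lemma perimeter_div_add_one {a b c : ℝ} (ha : 0 ≤ a) (hab : a ≤ b) (hbc : b ≤ c) :
    |a / (a + 1) - b / (b + 1)| + |b / (b + 1) - c / (c + 1)| + |a / (a + 1) - c / (c + 1)| =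
      (|a - b| + |b - c| + |a - c|) / ((a + 1) * (c + 1)) := by
  rw [abs_sub_add_abs_sub_add_abs_sub_of_le (div_add_one_le_div_add_one ha hab)
      (div_add_one_le_div_add_one (ha.trans hab) hbc),
    abs_sub_add_abs_sub_add_abs_sub_of_le hab hbc,
    div_add_one_sub_div_add_one (by linarith) (by linarith)]
  ring

lemma exists_pos_lt_inv_add_one_mul_three_mul_add_one {α : ℝ} (hα : α < 1) :
    ∃ ε : ℝ, 0 < ε ∧ 3 * ε ≤ 1 ∧ α < ((ε + 1) * (3 * ε + 1))⁻¹ := by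
  have hcont : Tendsto (fun ε : ℝ => ((ε + 1) * (3 * ε + 1))⁻¹) (𝓝[>] 0) (𝓝 1) := by
    have : ContinuousAt (fun ε : ℝ => ((ε + 1) * (3 * ε + 1))⁻¹) 0 := by
      fun_prop (disch := norm_num)
    simpa using this.tendsto.mono_left nhdsWithin_le_nhds
  have hsmall : ∀ᶠ ε in 𝓝[>] (0 : ℝ), ε < 1 / 3 :=
    nhdsWithin_le_nhds (eventually_lt_nhds (by norm_num))
  obtain ⟨ε, hεpos, hεsmall, hεα⟩ :=
    (eventually_mem_nhdsWithin.and (hsmall.and (hcont.eventually_const_lt hα))).exists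
  exact ⟨ε, hεpos, by linarith, hεα⟩

theorem stmt_14_general (T : ℝ → ℝ)
    (hT1 : ∀ x ∈ Set.Icc (0:ℝ) 1, T x = x / (x + 1)) :
    ¬ ∃ α : ℝ, 0 ≤ α ∧ α < 1 ∧
      ∀ x ∈ (Set.Icc (0:ℝ) 1 ∪ {t : ℝ | ∃ n : ℕ, 1 ≤ n ∧ (t = 4 * n ∨ t = 4 * n + 1)}),
      ∀ y ∈ (Set.Icc (0:ℝ) 1 ∪ {t : ℝ | ∃ n : ℕ, 1 ≤ n ∧ (t = 4 * n ∨ t = 4 * n + 1)}),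
      ∀ z ∈ (Set.Icc (0:ℝ) 1 ∪ {t : ℝ | ∃ n : ℕ, 1 ≤ n ∧ (t = 4 * n ∨ t = 4 * n + 1)}),
        x ≠ y → y ≠ z → x ≠ z →
        |T x - T y| + |T y - T z| + |T x - T z| ≤
          α * (|x - y| + |y - z| + |x - z|) := by
  rintro ⟨α, -, hα, hcontr⟩
  obtain ⟨ε, hε, hε3, hαε⟩ := exists_pos_lt_inv_add_one_mul_three_mul_add_one hα
  have hI : ∀ t, 0 ≤ t → t ≤ 3 * ε → t ∈ Set.Icc (0:ℝ) 1 := fun t h0 h3 => ⟨h0, by linarith⟩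
  have h1 := hI ε hε.le (by linarith)
  have h2 := hI (2 * ε) (by linarith) (by linarith)
  have h3 := hI (3 * ε) (by linarith) le_rfl
  have key := hcontr ε (.inl h1) (2 * ε) (.inl h2) (3 * ε) (.inl h3)
    (by intro h; linarith) (by intro h; linarith) (by intro h; linarith)
  rw [hT1 _ h1, hT1 _ h2, hT1 _ h3, perimeter_div_add_one hε.le (by linarith) (by linarith),
    abs_sub_add_abs_sub_add_abs_sub_of_le (by linarith) (by linarith), div_eq_mul_inv,
    mul_comm] at key
  have hperim : 0 < 2 * (3 * ε - ε) := by linarith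
  exact absurd key (not_le.2 (mul_lt_mul_of_pos_right hαε hperim))

theorem stmt_14 (T : ℝ → ℝ)
    (hT1 : ∀ x ∈ Set.Icc (0:ℝ) 1, T x = x / (x + 1))
    (hT2 : ∀ n : ℕ, 1 ≤ n → T (4 * n) = 0 ∧ T (4 * n + 1) = 1 - 1 / n) :
    ¬ ∃ α : ℝ, 0 ≤ α ∧ α < 1 ∧
      ∀ x ∈ (Set.Icc (0:ℝ) 1 ∪ {t : ℝ | ∃ n : ℕ, 1 ≤ n ∧ (t = 4 * n ∨ t = 4 * n + 1)}),
      ∀ y ∈ (Set.Icc (0:ℝ) 1 ∪ {t : ℝ | ∃ n : ℕ, 1 ≤ n ∧ (t = 4 * n ∨ t = 4 * n + 1)}),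
      ∀ z ∈ (Set.Icc (0:ℝ) 1 ∪ {t : ℝ | ∃ n : ℕ, 1 ≤ n ∧ (t = 4 * n ∨ t = 4 * n + 1)}),
        x ≠ y → y ≠ z → x ≠ z →
        |T x - T y| + |T y - T z| + |T x - T z| ≤
          α * (|x - y| + |y - z| + |x - z|) :=
  stmt_14_general T hT1
end
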